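/- Let W be a symmetric brace algebra over k, let W′ be a ℤ-graded k-vector space, and let A : W′ → W and C : W → W′ be degree-0 linear maps with C∘A = id_{W′} such that for all homogeneous θ, φ ∈ W one has (A(C(θ)))⟨φ⟩ = 0 and C(θ⟨A(C(φ))⟩) = C(θ⟨φ⟩). For Φ ∈ W and F_1,…,F_n ∈ W′ define the brace Φ[F_1,…,F_n] := C(Φ⟨A(F_1),…,A(F_n)⟩) ∈ W′. Then Φ[F_1,…,F_n] is graded symmetric in F_1,…,F_n, and for all homogeneous Φ, Φ_1,…,Φ_m ∈ W with C(Φ_1) = ⋯ = C(Φ_m) = 0 one has Φ⟨Φ_1,…,Φ_m⟩[F_1,…,F_n] = Σ ε · Φ[Φ_1[F_{i^1_1},…,F_{i^1_{t_1}}], …, Φ_m[F_{i^m_1},…,F_{i^m_{t_m}}], F_{i^{m+1}_1},…,F_{i^{m+1}_{t_{m+1}}}], where the sum runs over all unshuffle decompositions i^1_1<⋯<i^1_{t_1}, …, i^{m+1}_1<⋯<i^{m+1}_{t_{m+1}} of {1,…,n} with t_1,…,t_m ≥ 1 and t_{m+1} ≥ 0, and ε is the Koszul sign of the corresponding permutation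 of F_1,…,F_n. -/

import Mathlib

/-!
Everything rests on one vanishing statement: if `C zⱼ = 0` for one slot, then
`C(θ⟨z₁,…,zₙ⟩) = 0`. For one slot this is the hypothesis `C(θ⟨A C φ⟩) = C(θ⟨φ⟩)`; in general,
after moving the slot to the end by graded symmetry, the brace axiom writes `θ⟨z₁,…,zₙ⟩` as
`θ⟨z₁,…,zₙ₋₁⟩⟨zₙ⟩` minus braces with `zᵢ⟨zₙ⟩` in slot `i`, all killed by `C` by induction.
By multilinearity, `C(θ⟨z⟩)` then depends only on the `C zᵢ`. Applying `C` to the brace axiom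
for `Φ⟨Φ₁,…,Φₘ⟩⟨A F₁,…,A Fₙ⟩`, the terms in which some `Φᵢ` receives no `F` vanish, and in the
others each `Φᵢ⟨…⟩` may be replaced by `A C(Φᵢ⟨…⟩)`, which gives the induced braces.
-/

open scoped BigOperators

/-- The Koszul sign of a permutation `σ` acting on graded elements whose
degrees are recorded by `d` (the sign picked up when rearranging
`(y 0, …, y (n-1))` into `(y (σ 0), …, y (σ (n-1)))`). -/
def koszulSign {n : ℕ} (d : Fin n → ℤ) (σ : Equiv.Perm (Fin n)) : ℤˣ :=
  ∏ p ∈ Finset.univ.filter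
      (fun p : Fin n × Fin n => p.1 < p.2 ∧ σ p.2 < σ p.1),
    (-1 : ℤˣ) ^ (d (σ p.1) * d (σ p.2))

/-- An "unshuffle decomposition" of `{1,…,n}` into `m + 1` blocks is encoded
by the function `g : Fin n → Fin (m+1)` assigning to each index its block;
the elements of each block are taken in increasing order.  `blockCard g j`
is the size `t_j` of the `j`-th block. -/
def blockCard {n m : ℕ} (g : Fin n → Fin (m + 1)) (j : Fin (m + 1)) : ℕ :=
  (Finset.univ.filter fun b => g b = j).card

/-- The increasing enumeration `i^j_1 < ⋯ < i^j_{t_j}` of the `j`-th block. -/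
def blockEmb {n m : ℕ} (g : Fin n → Fin (m + 1)) (j : Fin (m + 1))
    (a : Fin (blockCard g j)) : Fin n :=
  ((Finset.univ.filter fun b => g b = j).orderIsoOfFin rfl a : Fin n)

/-- The permutation of `{1,…,n}` corresponding to the unshuffle decomposition
`g`: it lists the elements of block `0`, then of block `1`, …, each block in
increasing order (obtained by sorting indices by block lexicographically). -/
def sortPerm {n m : ℕ} (g : Fin n → Fin (m + 1)) : Equiv.Perm (Fin n) :=
  Tuple.sort (fun b => (toLex (g b, b) : Lex (Fin (m + 1) × Fin n)))

/-- A symmetric brace algebra over `k`: a ℤ-graded vector space `W` with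
multilinear degree-0 graded-symmetric braces `x⟨x_1,…,x_n⟩` such that
`x⟨⟩ = x` and the brace axiom holds. -/
structure SymmBraceAlg (k : Type*) (W : Type*) [Field k] [AddCommGroup W]
    [Module k W] where
  grading : ℤ → Submodule k W
  internal : DirectSum.IsInternal grading
  brace : ∀ n : ℕ, W → (Fin n → W) → W
  /-- multilinearity in the first argument -/
  brace_add_left : ∀ (n : ℕ) (x x' : W) (y : Fin n → W),
    brace n (x + x') y = brace n x y + brace n x' y
  brace_smul_left : ∀ (n : ℕ) (c : k) (x : W) (y : Fin n → W),
    brace n (c • x) y = c • brace n x y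
  /-- multilinearity in each of the remaining arguments -/
  brace_add_slot : ∀ (n : ℕ) (x : W) (y : Fin n → W) (i : Fin n) (u v : W),
    brace n x (Function.update y i (u + v)) =
      brace n x (Function.update y i u) + brace n x (Function.update y i v)
  brace_smul_slot : ∀ (n : ℕ) (x : W) (y : Fin n → W) (i : Fin n) (c : k) (u : W),
    brace n x (Function.update y i (c • u)) =
      c • brace n x (Function.update y i u)
  /-- the braces have degree 0 -/
  brace_degree : ∀ (n : ℕ) (dx : ℤ) (dy : Fin n → ℤ) (x : W) (y : Fin n → W),
    x ∈ grading dx → (∀ i, y i ∈ grading (dy i)) →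
    brace n x y ∈ grading (dx + ∑ i, dy i)
  /-- graded symmetry in `x_1, …, x_n` -/
  brace_symm : ∀ (n : ℕ) (dy : Fin n → ℤ) (x : W) (y : Fin n → W),
    (∀ i, y i ∈ grading (dy i)) → ∀ σ : Equiv.Perm (Fin n),
      brace n x (fun i => y (σ i)) = (koszulSign dy σ : ℤ) • brace n x y
  /-- `x⟨⟩ = x` -/
  brace_empty : ∀ (x : W) (y : Fin 0 → W), brace 0 x y = x
  /-- the brace axiom: `x⟨x_1,…,x_m⟩⟨y_1,…,y_n⟩` is the sum, over all
  unshuffle decompositions of `{1,…,n}` into `m + 1` blocks, of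
  `ε • x⟨x_1⟨block 1⟩,…,x_m⟨block m⟩, block (m+1)⟩`, `ε` being the Koszul
  sign of the corresponding permutation of the graded elements `y`. -/
  brace_axiom : ∀ (m n : ℕ) (dy : Fin n → ℤ) (x : W) (xs : Fin m → W)
    (y : Fin n → W), (∀ i, y i ∈ grading (dy i)) →
    brace n (brace m x xs) y =
      ∑ g : Fin n → Fin (m + 1),
        (koszulSign dy (sortPerm g) : ℤ) •
          brace (m + blockCard g (Fin.last m)) x
            (Fin.append
              (fun i : Fin m =>
                brace (blockCard g i.castSucc) (xs i)
                  (fun a => y (blockEmb g i.castSucc a)))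
              (fun a => y (blockEmb g (Fin.last m) a)))

/-- The induced brace `Φ[F_1,…,F_n] := C(Φ⟨A F_1,…,A F_n⟩) ∈ W'`. -/
def mbrace {k W W' : Type} [Field k] [AddCommGroup W] [Module k W]
    [AddCommGroup W'] [Module k W'] (B : SymmBraceAlg k W)
    (A : W' →ₗ[k] W) (C : W →ₗ[k] W') (n : ℕ) (Φ : W) (F : Fin n → W') : W' :=
  C (B.brace n Φ fun i => A (F i))

open Function

lemma koszulSign_one {n : ℕ} (d : Fin n → ℤ) : koszulSign d 1 = 1 := by
  unfold koszulSign
  rw [Finset.filter_false_of_mem fun p _ ⟨h, h'⟩ => (h.trans h').false, Finset.prod_empty]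

lemma blockCard_const {n m : ℕ} (j j' : Fin (m + 1)) :
    blockCard (fun _ : Fin n => j) j' = if j = j' then n else 0 := by
  unfold blockCard
  split_ifs with h <;> simp [h]

lemma update_mem_grading {ι : Type*} [DecidableEq ι] {k W : Type*} [Semiring k]
    [AddCommMonoid W] [Module k W] {G : ℤ → Submodule k W} {z : ι → W} {dz : ι → ℤ}
    (hz : ∀ i, z i ∈ G (dz i)) {j : ι} {v : W} {e : ℤ} (hv : v ∈ G e) :
    ∀ i, update z j v i ∈ G (update dz j e i) := by
  intro i
  rcases eq_or_ne i j with rfl | h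
  · simpa using hv
  · simpa [h] using hz i

lemma append_mem_grading {k W : Type*} [Semiring k] [AddCommMonoid W] [Module k W]
    {G : ℤ → Submodule k W} {m n : ℕ} {f : Fin m → W} {g : Fin n → W}
    {df : Fin m → ℤ} {dg : Fin n → ℤ} (hf : ∀ i, f i ∈ G (df i)) (hg : ∀ i, g i ∈ G (dg i)) :
    ∀ i, Fin.append f g i ∈ G (Fin.append df dg i) :=
  Fin.addCases (fun i => by simpa using hf i) (fun i => by simpa using hg i)

namespace SymmBraceAlg

variable {k W : Type*} [Field k] [AddCommGroup W] [Module k W] (B : SymmBraceAlg k W)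

lemma brace_of_card_eq_zero {c : ℕ} (hc : c = 0) (x : W) (y : Fin c → W) :
    B.brace c x y = x := by
  subst hc
  exact B.brace_empty x y

lemma brace_eq_zero_of_apply_eq_zero {n : ℕ} (x : W) {y : Fin n → W} {j : Fin n}
    (hy : y j = 0) : B.brace n x y = 0 := by
  have : y = update y j ((0 : k) • (0 : W)) := by rw [smul_zero, ← hy, update_eq_self]
  rw [this, B.brace_smul_slot, zero_smul]

lemma brace_update_sub {n : ℕ} (x : W) (y : Fin n → W) (j : Fin n) (u v : W) :
    B.brace n x (update y j (u - v)) =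
      B.brace n x (update y j u) - B.brace n x (update y j v) := by
  rw [eq_sub_iff_add_eq, ← B.brace_add_slot, sub_add_cancel]

lemma brace_const_of_card_eq_one {c : ℕ} (hc : c = 1) (x y : W) :
    B.brace c x (fun _ => y) = B.brace 1 x ![y] := by
  subst hc
  congr 1
  funext a
  simp

lemma brace_append_of_card_eq_zero {n c : ℕ} (hc : c = 0) (x : W) (f : Fin n → W)
    (g : Fin c → W) : B.brace (n + c) x (Fin.append f g) = B.brace n x f := by
  subst hc
  rw [show g = Fin.elim0 from funext fun i => i.elim0, Fin.append_elim0]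
  rfl

lemma brace_append_of_card_eq_one {n c : ℕ} (hc : c = 1) (x : W) (f : Fin n → W) (y : W) :
    B.brace (n + c) x (Fin.append f fun _ => y) = B.brace (n + 1) x (Fin.snoc f y) := by
  subst hc
  rw [Fin.append_right_eq_snoc]

/-- The brace axiom with a single outer argument. -/
lemma brace_one_brace {m : ℕ} (x : W) (xs : Fin m → W) {d : ℤ} {y : W}
    (hy : y ∈ B.grading d) :
    B.brace 1 (B.brace m x xs) ![y] =
      B.brace (m + 1) x (Fin.snoc xs y) +
        ∑ i, B.brace m x (update xs i (B.brace 1 (xs i) ![y])) := by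
  classical
  have hconst : ∀ F : (Fin 1 → Fin (m + 1)) → W, ∑ g, F g = ∑ j, F fun _ => j :=
    fun F => ((Equiv.funUnique (Fin 1) (Fin (m + 1))).symm.sum_comp F).symm
  rw [B.brace_axiom m 1 (fun _ => d) x xs ![y] (by simpa using hy), hconst,
    Fin.sum_univ_castSucc, add_comm]
  have hsort : ∀ g : Fin 1 → Fin (m + 1), sortPerm g = 1 := fun _ => Subsingleton.elim _ _
  simp only [hsort, koszulSign_one, Units.val_one, one_smul, Matrix.cons_val_fin_one]
  congr 1
  · have hxs : (fun i : Fin m => B.brace (blockCard (fun _ : Fin 1 => Fin.last m) i.castSucc)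
        (xs i) fun _ => y) = xs := funext fun i =>
      B.brace_of_card_eq_zero (by simp [blockCard_const, (Fin.castSucc_lt_last i).ne']) _ _
    rw [B.brace_append_of_card_eq_one (by simp [blockCard_const]), hxs]
  · refine Finset.sum_congr rfl fun i₀ _ => ?_
    rw [B.brace_append_of_card_eq_zero (by simp [blockCard_const, (Fin.castSucc_lt_last i₀).ne])]
    congr 1
    funext i
    rcases eq_or_ne i i₀ with rfl | h
    · rw [update_self, B.brace_const_of_card_eq_one (by simp [blockCard_const])]
    · rw [update_of_ne h, B.brace_of_card_eq_zero (by simp [blockCard_const, h.symm])]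

end SymmBraceAlg

section Transfer

variable {k W W' : Type*} [Field k] [AddCommGroup W] [Module k W]
  [AddCommGroup W'] [Module k W'] {B : SymmBraceAlg k W} {A : W' →ₗ[k] W} {C : W →ₗ[k] W'}

lemma map_brace_one_eq_zero
    (h2 : ∀ (dθ dφ : ℤ) (θ φ : W), θ ∈ B.grading dθ → φ ∈ B.grading dφ →
      C (B.brace 1 θ ![A (C φ)]) = C (B.brace 1 θ ![φ]))
    {dθ dφ : ℤ} {θ φ : W} (hθ : θ ∈ B.grading dθ) (hφ : φ ∈ B.grading dφ) (hCφ : C φ = 0) :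
    C (B.brace 1 θ ![φ]) = 0 := by
  rw [← h2 dθ dφ θ φ hθ hφ, hCφ, map_zero,
    B.brace_eq_zero_of_apply_eq_zero (j := 0) θ rfl, map_zero]

lemma map_brace_perm_eq_zero_iff {n : ℕ} {dz : Fin n → ℤ} (θ : W) {z : Fin n → W}
    (hz : ∀ i, z i ∈ B.grading (dz i)) (σ : Equiv.Perm (Fin n)) :
    C (B.brace n θ fun i => z (σ i)) = 0 ↔ C (B.brace n θ z) = 0 := by
  rw [B.brace_symm n dz θ z hz σ, map_zsmul, ← Units.smul_def, smul_eq_zero_iff_eq]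

lemma map_brace_eq_zero_of_map_eq_zero
    (h2 : ∀ (dθ dφ : ℤ) (θ φ : W), θ ∈ B.grading dθ → φ ∈ B.grading dφ →
      C (B.brace 1 θ ![A (C φ)]) = C (B.brace 1 θ ![φ]))
    {n : ℕ} {dθ : ℤ} {dz : Fin n → ℤ} {θ : W} {z : Fin n → W} (j : Fin n)
    (hθ : θ ∈ B.grading dθ) (hz : ∀ i, z i ∈ B.grading (dz i)) (hzj : C (z j) = 0) :
    C (B.brace n θ z) = 0 := by
  induction n with
  | zero => exact j.elim0
  | succ n ih =>
    rw [← map_brace_perm_eq_zero_iff θ hz (Equiv.swap j (Fin.last n))]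
    set w := fun i => z (Equiv.swap j (Fin.last n) i)
    have hw : ∀ i, w i ∈ B.grading (dz (Equiv.swap j (Fin.last n) i)) := fun i => hz _
    have hwl : C (w (Fin.last n)) = 0 := by simpa [w] using hzj
    have hinit := B.brace_degree n dθ _ θ (Fin.init w) hθ fun i => hw i.castSucc
    have hexpand := B.brace_one_brace θ (Fin.init w) (hw (Fin.last n))
    rw [Fin.snoc_init_self] at hexpand
    rw [eq_sub_of_add_eq hexpand.symm, map_sub, map_brace_one_eq_zero h2 hinit (hw _) hwl,
      zero_sub, neg_eq_zero, map_sum]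
    refine Finset.sum_eq_zero fun i _ => ih i (update_mem_grading (fun i : Fin n => hw i.castSucc)
      (B.brace_degree 1 _ (fun _ => _) _ ![w (Fin.last n)] (hw i.castSucc)
        fun _ => by simpa using hw (Fin.last n))) ?_
    rw [update_self]
    exact map_brace_one_eq_zero h2 (hw _) (hw _) hwl

lemma map_brace_update_congr
    (h2 : ∀ (dθ dφ : ℤ) (θ φ : W), θ ∈ B.grading dθ → φ ∈ B.grading dφ →
      C (B.brace 1 θ ![A (C φ)]) = C (B.brace 1 θ ![φ]))
    {n : ℕ} {dθ : ℤ} {dz : Fin n → ℤ} {θ : W} {z : Fin n → W} (j : Fin n) {u v : W}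
    (hθ : θ ∈ B.grading dθ) (hz : ∀ i, z i ∈ B.grading (dz i))
    (hu : u ∈ B.grading (dz j)) (hv : v ∈ B.grading (dz j)) (huv : C u = C v) :
    C (B.brace n θ (update z j u)) = C (B.brace n θ (update z j v)) := by
  rw [← sub_eq_zero, ← map_sub, ← B.brace_update_sub]
  refine map_brace_eq_zero_of_map_eq_zero h2 j hθ (update_mem_grading hz (sub_mem hu hv)) ?_
  rw [update_self, map_sub, huv, sub_self]

lemma map_brace_congr
    (h2 : ∀ (dθ dφ : ℤ) (θ φ : W), θ ∈ B.grading dθ → φ ∈ B.grading dφ →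
      C (B.brace 1 θ ![A (C φ)]) = C (B.brace 1 θ ![φ]))
    {n : ℕ} {dθ : ℤ} {dz : Fin n → ℤ} {θ : W} {z z' : Fin n → W}
    (hθ : θ ∈ B.grading dθ) (hz : ∀ i, z i ∈ B.grading (dz i))
    (hz' : ∀ i, z' i ∈ B.grading (dz i)) (hzz' : ∀ i, C (z i) = C (z' i)) :
    C (B.brace n θ z) = C (B.brace n θ z') := by
  classical
  suffices H : ∀ S : Finset (Fin n),
      C (B.brace n θ fun i => if i ∈ S then z' i else z i) = C (B.brace n θ z) by
    simpa using (H Finset.univ).symm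
  intro S
  induction S using Finset.induction_on with
  | empty => simp
  | insert a S ha ih =>
    set w := fun i => if i ∈ S then z' i else z i
    have hw : ∀ i, w i ∈ B.grading (dz i) := fun i => by
      by_cases h : i ∈ S <;> simp [w, h, hz i, hz' i]
    have hwa : update w a (z a) = w := by simp [w, ha]
    have hins : (fun i => if i ∈ insert a S then z' i else z i) = update w a (z' a) := by
      funext i
      rcases eq_or_ne i a with rfl | h <;> simp [w, *]
    rw [hins, map_brace_update_congr h2 a hθ hw (hz' a) (hz a) (hzz' a).symm, hwa, ih]

end Transfer

section InducedBrace

variable {k W W' : Type} [Field k] [AddCommGroup W] [Module k W]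
  [AddCommGroup W'] [Module k W'] {B : SymmBraceAlg k W} {A : W' →ₗ[k] W} {C : W →ₗ[k] W'}
  {grading' : ℤ → Submodule k W'}

lemma mbrace_comp_perm (hA : ∀ (d : ℤ) (x : W'), x ∈ grading' d → A x ∈ B.grading d)
    {n : ℕ} {dF : Fin n → ℤ} (Φ : W) {F : Fin n → W'} (hF : ∀ i, F i ∈ grading' (dF i))
    (σ : Equiv.Perm (Fin n)) :
    mbrace B A C n Φ (fun i => F (σ i)) = (koszulSign dF σ : ℤ) • mbrace B A C n Φ F := by
  rw [mbrace, B.brace_symm n dF Φ _ (fun i => hA _ _ (hF i)) σ, map_zsmul, mbrace]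

lemma mbrace_brace_of_map_eq_zero
    (hA : ∀ (d : ℤ) (x : W'), x ∈ grading' d → A x ∈ B.grading d)
    (hC : ∀ (d : ℤ) (x : W), x ∈ B.grading d → C x ∈ grading' d)
    (hCA : ∀ x : W', C (A x) = x)
    (h2 : ∀ (dθ dφ : ℤ) (θ φ : W), θ ∈ B.grading dθ → φ ∈ B.grading dφ →
      C (B.brace 1 θ ![A (C φ)]) = C (B.brace 1 θ ![φ]))
    {m n : ℕ} {dΦ : ℤ} {dΦs : Fin m → ℤ} {dF : Fin n → ℤ} {Φ : W} {Φs : Fin m → W}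
    {F : Fin n → W'} (hΦ : Φ ∈ B.grading dΦ) (hΦs : ∀ i, Φs i ∈ B.grading (dΦs i))
    (hF : ∀ i, F i ∈ grading' (dF i)) (hCΦs : ∀ i, C (Φs i) = 0) :
    mbrace B A C n (B.brace m Φ Φs) F =
      ∑ g ∈ Finset.univ.filter
          (fun g : Fin n → Fin (m + 1) => ∀ i : Fin m, 0 < blockCard g i.castSucc),
        (koszulSign dF (sortPerm g) : ℤ) •
          mbrace B A C (m + blockCard g (Fin.last m)) Φ
            (Fin.append
              (fun i : Fin m =>
                mbrace B A C (blockCard g i.castSucc) (Φs i)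
                  (fun a => F (blockEmb g i.castSucc a)))
              (fun a => F (blockEmb g (Fin.last m) a))) := by
  have hAF : ∀ i, A (F i) ∈ B.grading (dF i) := fun i => hA _ _ (hF i)
  have hslots : ∀ g : Fin n → Fin (m + 1), ∀ idx, Fin.append
      (fun i : Fin m => B.brace (blockCard g i.castSucc) (Φs i)
        fun a => A (F (blockEmb g i.castSucc a)))
      (fun a => A (F (blockEmb g (Fin.last m) a))) idx ∈
      B.grading (Fin.append (fun i : Fin m => dΦs i + ∑ a, dF (blockEmb g i.castSucc a))
        (fun a => dF (blockEmb g (Fin.last m) a)) idx) := fun g =>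
    append_mem_grading (fun i => B.brace_degree _ _ _ _ _ (hΦs i) fun _ => hAF _) fun _ => hAF _
  rw [mbrace, B.brace_axiom m n dF Φ Φs _ hAF, map_sum]
  simp only [map_zsmul]
  refine (Finset.sum_subset (Finset.filter_subset _ _) fun g _ hg => ?_).symm.trans
    (Finset.sum_congr rfl fun g _ => ?_)
  · obtain ⟨i₀, hi₀⟩ : ∃ i₀ : Fin m, blockCard g i₀.castSucc = 0 := by simpa using hg
    rw [map_brace_eq_zero_of_map_eq_zero h2 (Fin.castAdd _ i₀) hΦ (hslots g)
      (by rw [Fin.append_left, B.brace_of_card_eq_zero hi₀, hCΦs]), smul_zero]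
  · congr 1
    refine map_brace_congr h2 hΦ (hslots g) (fun idx => hA _ _ ?_) fun idx => ?_
    · exact append_mem_grading (fun i => hC _ _ (B.brace_degree _ _ _ _ _ (hΦs i)
        fun _ => hAF _)) (fun _ => hF _) idx
    · refine Fin.addCases (fun i => ?_) (fun a => ?_) idx <;> simp [mbrace, hCA]

end InducedBrace

theorem statement4_general
    {k W W' : Type} [Field k] [AddCommGroup W] [Module k W]
    [AddCommGroup W'] [Module k W']
    (B : SymmBraceAlg k W)
    -- `W'` is a graded vector space:
    (grading' : ℤ → Submodule k W')
    -- `A` and `C` are degree-0 linear maps with `C ∘ A = id`: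
    (A : W' →ₗ[k] W) (C : W →ₗ[k] W')
    (hA : ∀ (d : ℤ) (x : W'), x ∈ grading' d → A x ∈ B.grading d)
    (hC : ∀ (d : ℤ) (x : W), x ∈ B.grading d → C x ∈ grading' d)
    (hCA : ∀ x : W', C (A x) = x)
    (h2 : ∀ (dθ dφ : ℤ) (θ φ : W), θ ∈ B.grading dθ → φ ∈ B.grading dφ →
      C (B.brace 1 θ ![A (C φ)]) = C (B.brace 1 θ ![φ])) :
    -- (a) `Φ[F_1,…,F_n]` is graded symmetric in `F_1, …, F_n`:
    (∀ (n : ℕ) (dF : Fin n → ℤ) (Φ : W) (F : Fin n → W'),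
      (∀ i, F i ∈ grading' (dF i)) → ∀ σ : Equiv.Perm (Fin n),
        mbrace B A C n Φ (fun i => F (σ i)) =
          (koszulSign dF σ : ℤ) • mbrace B A C n Φ F) ∧
    -- (b) the left-module identity over the symmetric brace algebra `W`,
    -- for homogeneous `Φ, Φ_1, …, Φ_m` with `C Φ_1 = ⋯ = C Φ_m = 0`; the sum
    -- runs over all unshuffle decompositions of `{1,…,n}` into `m + 1`
    -- blocks whose first `m` blocks are nonempty:
    (∀ (m n : ℕ) (dΦ : ℤ) (dΦs : Fin m → ℤ) (dF : Fin n → ℤ)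
      (Φ : W) (Φs : Fin m → W) (F : Fin n → W'),
      Φ ∈ B.grading dΦ → (∀ i, Φs i ∈ B.grading (dΦs i)) →
      (∀ i, F i ∈ grading' (dF i)) →
      (∀ i, C (Φs i) = 0) →
      mbrace B A C n (B.brace m Φ Φs) F =
        ∑ g ∈ Finset.univ.filter
            (fun g : Fin n → Fin (m + 1) =>
              ∀ i : Fin m, 0 < blockCard g i.castSucc),
          (koszulSign dF (sortPerm g) : ℤ) •
            mbrace B A C (m + blockCard g (Fin.last m)) Φ
              (Fin.append
                (fun i : Fin m =>
                  mbrace B A C (blockCard g i.castSucc) (Φs i)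
                    (fun a => F (blockEmb g i.castSucc a)))
                (fun a => F (blockEmb g (Fin.last m) a)))) := by
  exact ⟨fun _ _ Φ _ hF σ => mbrace_comp_perm hA Φ hF σ,
    fun _ _ _ _ _ _ _ _ hΦ hΦs hF hCΦs => mbrace_brace_of_map_eq_zero hA hC hCA h2 hΦ hΦs hF hCΦs⟩

theorem statement4
    {k W W' : Type} [Field k] [AddCommGroup W] [Module k W]
    [AddCommGroup W'] [Module k W']
    (B : SymmBraceAlg k W)
    -- `W'` is a graded vector space:
    (grading' : ℤ → Submodule k W') (internal' : DirectSum.IsInternal grading')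
    -- `A` and `C` are degree-0 linear maps with `C ∘ A = id`:
    (A : W' →ₗ[k] W) (C : W →ₗ[k] W')
    (hA : ∀ (d : ℤ) (x : W'), x ∈ grading' d → A x ∈ B.grading d)
    (hC : ∀ (d : ℤ) (x : W), x ∈ B.grading d → C x ∈ grading' d)
    (hCA : ∀ x : W', C (A x) = x)
    (h1 : ∀ (dθ dφ : ℤ) (θ φ : W), θ ∈ B.grading dθ → φ ∈ B.grading dφ →
      B.brace 1 (A (C θ)) ![φ] = 0)
    (h2 : ∀ (dθ dφ : ℤ) (θ φ : W), θ ∈ B.grading dθ → φ ∈ B.grading dφ →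
      C (B.brace 1 θ ![A (C φ)]) = C (B.brace 1 θ ![φ])) :
    -- (a) `Φ[F_1,…,F_n]` is graded symmetric in `F_1, …, F_n`:
    (∀ (n : ℕ) (dF : Fin n → ℤ) (Φ : W) (F : Fin n → W'),
      (∀ i, F i ∈ grading' (dF i)) → ∀ σ : Equiv.Perm (Fin n),
        mbrace B A C n Φ (fun i => F (σ i)) =
          (koszulSign dF σ : ℤ) • mbrace B A C n Φ F) ∧
    -- (b) the left-module identity over the symmetric brace algebra `W`,
    -- for homogeneous `Φ, Φ_1, …, Φ_m` with `C Φ_1 = ⋯ = C Φ_m = 0`; the sum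
    -- runs over all unshuffle decompositions of `{1,…,n}` into `m + 1`
    -- blocks whose first `m` blocks are nonempty:
    (∀ (m n : ℕ) (dΦ : ℤ) (dΦs : Fin m → ℤ) (dF : Fin n → ℤ)
      (Φ : W) (Φs : Fin m → W) (F : Fin n → W'),
      Φ ∈ B.grading dΦ → (∀ i, Φs i ∈ B.grading (dΦs i)) →
      (∀ i, F i ∈ grading' (dF i)) →
      (∀ i, C (Φs i) = 0) →
      mbrace B A C n (B.brace m Φ Φs) F =
        ∑ g ∈ Finset.univ.filter
            (fun g : Fin n → Fin (m + 1) =>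
              ∀ i : Fin m, 0 < blockCard g i.castSucc),
          (koszulSign dF (sortPerm g) : ℤ) •
            mbrace B A C (m + blockCard g (Fin.last m)) Φ
              (Fin.append
                (fun i : Fin m =>
                  mbrace B A C (blockCard g i.castSucc) (Φs i)
                    (fun a => F (blockEmb g i.castSucc a)))
                (fun a => F (blockEmb g (Fin.last m) a)))) :=
  statement4_general B grading' A C hA hC hCA h2
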